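/- For a regular expression with intersection e over alphabet Σ (syntax: letters, concatenation, union, intersection, and strict iteration ⁺, without 1 and 0 necessarily but with L denoting the language semantics), and for every nonempty word w ∈ Σ⁺: w ∈ L(e) if and only if the word-graph of w is below some graph in G(e) modulo homomorphism. Consequently, Σ⁺ ⊆ L(e) iff Trm(Σ⁺) ⊆ ⌊Trm(e)⌋, i.e., iff Σ⁺ ≤ e is valid in all relation algebras. -/

import Mathlib

/-- A 2-pointed labelled directed graph over label set `X`:
a finite vertex type, a set of labelled edges, and distinguished
input and output vertices. -/
structure PGraph (X : Type) where
  V : Type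
  fin : Finite V
  E : Set (V × X × V)
  inp : V
  out : V

/-- A graph homomorphism preserves the input, the output, and labelled edges. -/
def IsHom {X : Type} (G H : PGraph X) (φ : G.V → H.V) : Prop :=
  φ G.inp = H.inp ∧ φ G.out = H.out ∧
    ∀ p a q, (p, a, q) ∈ G.E → (φ p, a, φ q) ∈ H.E

/-- `gle G G'` (written `G ≲ G'`) iff there is a homomorphism from `G'` to `G`. -/
def gle {X : Type} (G G' : PGraph X) : Prop := ∃ φ : G'.V → G.V, IsHom G' G φ

/-- Graph of a variable: two vertices, one labelled edge from input to output. -/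
def gvar {X : Type} (a : X) : PGraph X :=
  ⟨Bool, inferInstance, {(false, a, true)}, false, true⟩

/-- Graph of `1`: one vertex, no edges. -/
def gone {X : Type} : PGraph X := ⟨Unit, inferInstance, ∅, (), ()⟩

/-- Graph of `⊤`: two isolated vertices. -/
def gtop {X : Type} : PGraph X := ⟨Bool, inferInstance, ∅, false, true⟩

/-- Converse of a graph: swap input and output. -/
def gconv {X : Type} (G : PGraph X) : PGraph X := ⟨G.V, G.fin, G.E, G.out, G.inp⟩

/-- Series composition: merge the output of `G` with the input of `H`. -/
def gseq {X : Type} (G H : PGraph X) : PGraph X :=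
  let r : G.V ⊕ H.V → G.V ⊕ H.V → Prop :=
    fun x y => x = Sum.inl G.out ∧ y = Sum.inr H.inp
  { V := Quot r
    fin := by
      have := G.fin; have := H.fin
      exact Finite.of_surjective (Quot.mk r) (fun q => Quot.exists_rep q)
    E := { e | (∃ p a q, (p, a, q) ∈ G.E ∧
                  e = (Quot.mk r (.inl p), a, Quot.mk r (.inl q)))
             ∨ (∃ p a q, (p, a, q) ∈ H.E ∧
                  e = (Quot.mk r (.inr p), a, Quot.mk r (.inr q))) }
    inp := Quot.mk r (.inl G.inp)
    out := Quot.mk r (.inr H.out) }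

/-- Parallel composition: merge the inputs and merge the outputs. -/
def gpar {X : Type} (G H : PGraph X) : PGraph X :=
  let r : G.V ⊕ H.V → G.V ⊕ H.V → Prop :=
    fun x y => (x = Sum.inl G.inp ∧ y = Sum.inr H.inp) ∨
               (x = Sum.inl G.out ∧ y = Sum.inr H.out)
  { V := Quot r
    fin := by
      have := G.fin; have := H.fin
      exact Finite.of_surjective (Quot.mk r) (fun q => Quot.exists_rep q)
    E := { e | (∃ p a q, (p, a, q) ∈ G.E ∧
                  e = (Quot.mk r (.inl p), a, Quot.mk r (.inl q)))
             ∨ (∃ p a q, (p, a, q) ∈ H.E ∧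
                  e = (Quot.mk r (.inr p), a, Quot.mk r (.inr q))) }
    inp := Quot.mk r (.inl G.inp)
    out := Quot.mk r (.inl G.out) }

/-- Simple terms: variables, composition and intersection only. -/
inductive STrm (X : Type) : Type
  | var : X → STrm X
  | comp : STrm X → STrm X → STrm X
  | inter : STrm X → STrm X → STrm X

/-- The (series-parallel) graph of a simple term. -/
def sgrOf {X : Type} : STrm X → PGraph X
  | .var a => gvar a
  | .comp u v => gseq (sgrOf u) (sgrOf v)
  | .inter u v => gpar (sgrOf u) (sgrOf v)

/-- The word-graph of a word `w = a₁…aₙ`: the path with `n+1` vertices and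
edges labelled `a₁,…,aₙ` from input to output. -/
def wordGraph {A : Type} (w : List A) : PGraph A where
  V := Fin (w.length + 1)
  fin := inferInstance
  E := { e | ∃ k : Fin w.length,
          e = (⟨(k : ℕ), Nat.lt_succ_of_lt k.isLt⟩, w.get k,
               ⟨(k : ℕ) + 1, Nat.succ_lt_succ k.isLt⟩) }
  inp := ⟨0, Nat.succ_pos _⟩
  out := ⟨w.length, Nat.lt_succ_self _⟩

/-- Simple expressions: letters, union, concatenation, intersection, and
strict iteration. -/
inductive SExp (X : Type) : Type
  | var : X → SExp X
  | plus : SExp X → SExp X → SExp X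
  | comp : SExp X → SExp X → SExp X
  | inter : SExp X → SExp X → SExp X
  | iter : SExp X → SExp X

/-- Language semantics of simple expressions (`∩` is language intersection,
`⁺` is strict iteration). -/
def slang {A : Type} : SExp A → Language A
  | .var a => {[a]}
  | .plus e f => slang e + slang f
  | .comp e f => slang e * slang f
  | .inter e f => {w | w ∈ slang e ∧ w ∈ slang f}
  | .iter e => slang e * KStar.kstar (slang e)

/-- The set of simple terms of a simple expression. -/
def strms {X : Type} : SExp X → Set (STrm X)
  | .var a => {STrm.var a}
  | .plus e f => strms e ∪ strms f
  | .comp e f => {w | ∃ u ∈ strms e, ∃ v ∈ strms f, w = STrm.comp u v}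
  | .inter e f => {w | ∃ u ∈ strms e, ∃ v ∈ strms f, w = STrm.inter u v}
  | .iter e => {w | ∃ u, ∃ l : List (STrm X),
      u ∈ strms e ∧ (∀ v ∈ l, v ∈ strms e) ∧ w = l.foldl STrm.comp u}

/-- Relational interpretation of a simple expression. -/
def sinterp {X S : Type} (σ : X → S → S → Prop) : SExp X → S → S → Prop
  | .var a => σ a
  | .plus e f => fun i j => sinterp σ e i j ∨ sinterp σ f i j
  | .comp e f => fun i j => ∃ k, sinterp σ e i k ∧ sinterp σ f k j
  | .inter e f => fun i j => sinterp σ e i j ∧ sinterp σ f i j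
  | .iter e => Relation.TransGen (sinterp σ e)

/-- The expression `a₁ + ⋯ + aₖ` summing a nonempty list of letters. -/
def sumOf {X : Type} (a : X) (l : List X) : SExp X :=
  l.foldl (fun e b => SExp.plus e (SExp.var b)) (SExp.var a)

/-!
Everything is evaluated in relational models `σ : A → S → S → Prop`. A graph relates `i` to `j`
in such a model when some edge-preserving map sends its ports to `i` and `j`, and an expression
relates exactly the pairs related by one of its terms. Two kinds of models are decisive. In the
line model of a word `w` (the letter `w[p]` relates `p` to `p + 1`), `e` relates `0` to `|w|` iff
`w ∈ L(e)`, and a graph relates `0` to `|w|` iff it lies above the word-graph of `w`: this is the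
first claim. In the model formed by the edges of a graph `G`, a graph `H` relates the ports of `G`
iff `G ≲ H`; so validity of `Σ⁺ ≤ e` yields the graph inclusion. Finally `Σ⁺ ⊆ L(e)` implies
validity because any pair related by `Σ⁺` is joined by a path spelling a word.
-/

namespace List

variable {α : Type}

theorem extract_append_extract (w : List α) {i m j : ℕ} (him : i ≤ m) (hmj : m ≤ j) :
    w.extract i m ++ w.extract m j = w.extract i j := by
  simp only [extract_eq_take_drop]
  rw [show j - i = (m - i) + (j - m) by omega, take_add, drop_drop,
    show i + (m - i) = m by omega]

theorem extract_add_one_of_getElem? {w : List α} {i : ℕ} {a : α} (h : w[i]? = some a) :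
    w.extract i (i + 1) = [a] := by
  obtain ⟨hi, rfl⟩ := getElem?_eq_some_iff.1 h
  rw [extract_eq_take_drop, drop_eq_getElem_cons hi, Nat.add_sub_cancel_left, take_succ_cons,
    take_zero]

end List

open scoped Computability

namespace Language

variable {α : Type}

theorem mem_singleton_iff {x y : List α} : x ∈ ({y} : Language α) ↔ x = y :=
  Iff.rfl

theorem mem_mul_kstar_of_mem {L : Language α} {x : List α} (hx : x ∈ L) : x ∈ L * L∗ := by
  simpa using append_mem_mul hx (nil_mem_kstar L)

theorem append_mem_mul_kstar {L : Language α} {x y : List α}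
    (hx : x ∈ L * L∗) (hy : y ∈ L) : x ++ y ∈ L * L∗ := by
  have : L * L∗ * L ≤ L * L∗ := by
    rw [mul_assoc]
    exact mul_le_mul_right kstar_mul_le_kstar L
  exact this (append_mem_mul hx hy)

end Language

section RelationalModels

variable {X S : Type}

def ginterp (σ : X → S → S → Prop) (G : PGraph X) (i j : S) : Prop :=
  ∃ φ : G.V → S, φ G.inp = i ∧ φ G.out = j ∧ ∀ p a q, (p, a, q) ∈ G.E → σ a (φ p) (φ q)

def edgeRel (G : PGraph X) (a : X) (p q : G.V) : Prop := (p, a, q) ∈ G.E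

theorem gle_iff_ginterp_edgeRel {G H : PGraph X} :
    gle G H ↔ ginterp (edgeRel G) H G.inp G.out :=
  Iff.rfl

theorem gle_refl (G : PGraph X) : gle G G :=
  ⟨id, rfl, rfl, fun _ _ _ h => h⟩

theorem gle_trans {G H K : PGraph X} (hGH : gle G H) (hHK : gle H K) : gle G K := by
  obtain ⟨φ, hφi, hφo, hφe⟩ := hGH
  obtain ⟨ψ, hψi, hψo, hψe⟩ := hHK
  exact ⟨φ ∘ ψ, by simp [hψi, hφi], by simp [hψo, hφo], fun p a q h => hφe _ _ _ (hψe _ _ _ h)⟩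

variable {σ : X → S → S → Prop} {i j : S}

theorem ginterp_gvar {a : X} : ginterp σ (gvar a) i j ↔ σ a i j := by
  constructor
  · rintro ⟨φ, rfl, rfl, hφ⟩
    exact hφ false a true rfl
  · intro h
    refine ⟨fun b => cond b j i, rfl, rfl, ?_⟩
    rintro _ _ _ ⟨⟩
    exact h

theorem ginterp_gseq {G H : PGraph X} :
    ginterp σ (gseq G H) i j ↔ ∃ k, ginterp σ G i k ∧ ginterp σ H k j := by
  constructor
  · rintro ⟨φ, rfl, rfl, hφ⟩
    refine ⟨φ (Quot.mk _ (.inl G.out)), ⟨fun p => φ (Quot.mk _ (.inl p)), rfl, rfl, ?_⟩,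
      ⟨fun p => φ (Quot.mk _ (.inr p)), ?_, rfl, ?_⟩⟩
    · exact fun p a q h => hφ _ _ _ (Or.inl ⟨p, a, q, h, rfl⟩)
    · exact congrArg φ (Quot.sound ⟨rfl, rfl⟩).symm
    · exact fun p a q h => hφ _ _ _ (Or.inr ⟨p, a, q, h, rfl⟩)
  · rintro ⟨k, ⟨φ, rfl, rfl, hφ⟩, ⟨ψ, hψi, rfl, hψ⟩⟩
    refine ⟨Quot.lift (Sum.elim φ ψ) ?_, rfl, rfl, ?_⟩
    · rintro _ _ ⟨rfl, rfl⟩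
      exact hψi.symm
    · rintro _ _ _ (⟨p, a, q, h, ⟨⟩⟩ | ⟨p, a, q, h, ⟨⟩⟩)
      exacts [hφ _ _ _ h, hψ _ _ _ h]

theorem ginterp_gpar {G H : PGraph X} :
    ginterp σ (gpar G H) i j ↔ ginterp σ G i j ∧ ginterp σ H i j := by
  constructor
  · rintro ⟨φ, rfl, rfl, hφ⟩
    refine ⟨⟨fun p => φ (Quot.mk _ (.inl p)), rfl, rfl, ?_⟩,
      ⟨fun p => φ (Quot.mk _ (.inr p)), ?_, ?_, ?_⟩⟩
    · exact fun p a q h => hφ _ _ _ (Or.inl ⟨p, a, q, h, rfl⟩)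
    · exact Eq.symm <| congrArg φ <| Quot.sound <| .inl ⟨rfl, rfl⟩
    · exact Eq.symm <| congrArg φ <| Quot.sound <| .inr ⟨rfl, rfl⟩
    · exact fun p a q h => hφ _ _ _ (Or.inr ⟨p, a, q, h, rfl⟩)
  · rintro ⟨⟨φ, rfl, rfl, hφ⟩, ⟨ψ, hψi, hψo, hψ⟩⟩
    refine ⟨Quot.lift (Sum.elim φ ψ) ?_, rfl, rfl, ?_⟩
    · rintro _ _ (⟨rfl, rfl⟩ | ⟨rfl, rfl⟩)
      · exact hψi.symm
      · exact hψo.symm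
    · rintro _ _ _ (⟨p, a, q, h, ⟨⟩⟩ | ⟨p, a, q, h, ⟨⟩⟩)
      exacts [hφ _ _ _ h, hψ _ _ _ h]

theorem transGen_ginterp_iff {T : Set (STrm X)} :
    Relation.TransGen (fun i j => ∃ v ∈ T, ginterp σ (sgrOf v) i j) i j ↔
      ∃ u ∈ T, ∃ l : List (STrm X), (∀ v ∈ l, v ∈ T) ∧
        ginterp σ (sgrOf (l.foldl STrm.comp u)) i j := by
  constructor
  · intro h
    induction h with
    | single h => exact h.imp fun u ⟨hu, hui⟩ => ⟨hu, [], by simp, hui⟩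
    | tail _ hkj ih =>
      obtain ⟨u, hu, l, hl, hui⟩ := ih
      obtain ⟨v, hv, hvj⟩ := hkj
      refine ⟨u, hu, l ++ [v], by simpa [or_imp, forall_and] using ⟨hl, hv⟩, ?_⟩
      rw [List.foldl_append]
      exact ginterp_gseq.2 ⟨_, hui, hvj⟩
  · rintro ⟨u, hu, l, hl, h⟩
    induction l using List.reverseRecOn generalizing j with
    | nil => exact .single ⟨u, hu, h⟩
    | append_singleton l v ih =>
      rw [List.foldl_append] at h
      obtain ⟨k, hik, hkj⟩ := ginterp_gseq.1 h
      exact .tail (ih (fun w hw => hl w (by simp [hw])) hik) ⟨v, hl v (by simp), hkj⟩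

theorem sinterp_iff_exists_ginterp (e : SExp X) :
    sinterp σ e i j ↔ ∃ v ∈ strms e, ginterp σ (sgrOf v) i j := by
  induction e generalizing i j with
  | var a => simp [sinterp, strms, sgrOf, ginterp_gvar]
  | plus e f ihe ihf => simp [sinterp, strms, ihe, ihf, or_and_right, exists_or]
  | comp e f ihe ihf =>
    simp only [sinterp, strms, ihe, ihf]
    constructor
    · rintro ⟨k, ⟨u, hu, hik⟩, v, hv, hkj⟩
      exact ⟨_, ⟨u, hu, v, hv, rfl⟩, ginterp_gseq.2 ⟨k, hik, hkj⟩⟩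
    · rintro ⟨_, ⟨u, hu, v, hv, rfl⟩, huv⟩
      obtain ⟨k, hik, hkj⟩ := ginterp_gseq.1 huv
      exact ⟨k, ⟨u, hu, hik⟩, v, hv, hkj⟩
  | inter e f ihe ihf =>
    simp only [sinterp, strms, ihe, ihf]
    constructor
    · rintro ⟨⟨u, hu, hui⟩, v, hv, hvi⟩
      exact ⟨_, ⟨u, hu, v, hv, rfl⟩, ginterp_gpar.2 ⟨hui, hvi⟩⟩
    · rintro ⟨_, ⟨u, hu, v, hv, rfl⟩, huv⟩
      obtain ⟨hui, hvi⟩ := ginterp_gpar.1 huv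
      exact ⟨⟨u, hu, hui⟩, v, hv, hvi⟩
  | iter e ihe =>
    have : sinterp σ e = fun i j => ∃ v ∈ strms e, ginterp σ (sgrOf v) i j := by
      funext i j
      exact propext ihe
    simp [sinterp, this, transGen_ginterp_iff, strms, and_assoc]

end RelationalModels

section Words

variable {X S : Type}

def lineRel (w : List X) (a : X) (p q : ℕ) : Prop := q = p + 1 ∧ w[p]? = some a

theorem mem_wordGraph_E_iff {w : List X} {p q : Fin (w.length + 1)} {a : X} :
    (p, a, q) ∈ (wordGraph w).E ↔ lineRel w a p q := by
  constructor
  · rintro ⟨k, ⟨⟩⟩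
    exact ⟨rfl, by simp⟩
  · rintro ⟨hq, hp⟩
    obtain ⟨hlt, rfl⟩ := List.getElem?_eq_some_iff.1 hp
    exact ⟨⟨p, hlt⟩, by simp [Fin.ext_iff, hq]⟩

theorem gle_wordGraph_iff {w : List X} {G : PGraph X} :
    gle (wordGraph w) G ↔ ginterp (lineRel w) G 0 w.length := by
  constructor
  · rintro ⟨φ, hi, ho, he⟩
    exact ⟨fun v => Fin.val (φ v), congrArg Fin.val hi, congrArg Fin.val ho,
      fun p a q h => mem_wordGraph_E_iff.1 (he p a q h)⟩
  · rintro ⟨φ, hi, ho, he⟩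
    refine ⟨fun v => ⟨min (φ v) w.length, by omega⟩, by simp [hi, wordGraph],
      by simp [ho, wordGraph], fun p a q h => mem_wordGraph_E_iff.2 ?_⟩
    obtain ⟨hq, hp⟩ := he p a q h
    have := (List.getElem?_eq_some_iff.1 hp).1
    exact ⟨by simp only; omega, by simpa [Nat.min_eq_left this.le] using hp⟩

def wordRel (σ : X → S → S → Prop) : List X → S → S → Prop
  | [] => Eq
  | a :: w => fun i j => ∃ k, σ a i k ∧ wordRel σ w k j

variable {σ : X → S → S → Prop} {i j : S}

theorem wordRel_append {u v : List X} :
    wordRel σ (u ++ v) i j ↔ ∃ k, wordRel σ u i k ∧ wordRel σ v k j := by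
  induction u generalizing i with
  | nil => simp [wordRel]
  | cons a u ih =>
    simp only [List.cons_append, wordRel, ih]
    exact ⟨fun ⟨k, hk, m, hm, hv⟩ => ⟨m, ⟨k, hk, hm⟩, hv⟩,
      fun ⟨m, ⟨k, hk, hm⟩, hv⟩ => ⟨k, hk, m, hm, hv⟩⟩

theorem reflTransGen_of_wordRel_flatten {R : S → S → Prop} {L : List (List X)}
    (hL : ∀ y ∈ L, ∀ {i j}, wordRel σ y i j → R i j) (h : wordRel σ L.flatten i j) :
    Relation.ReflTransGen R i j := by
  induction L generalizing i with
  | nil =>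
    obtain rfl : i = j := h
    exact .refl
  | cons y L ih =>
    obtain ⟨k, hy, hL'⟩ := wordRel_append.1 h
    exact .head (hL y List.mem_cons_self hy)
      (ih (fun z hz => hL z (List.mem_cons_of_mem _ hz)) hL')

theorem sinterp_of_mem_slang {e : SExp X} {w : List X} (hw : w ∈ slang e)
    (h : wordRel σ w i j) : sinterp σ e i j := by
  induction e generalizing w i j with
  | var a =>
    obtain rfl : w = [a] := hw
    obtain ⟨k, hk, rfl⟩ := h
    exact hk
  | plus e f ihe ihf =>
    rcases (Language.mem_add _ _ _).1 hw with hw | hw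
    · exact Or.inl (ihe hw h)
    · exact Or.inr (ihf hw h)
  | comp e f ihe ihf =>
    obtain ⟨u, hu, v, hv, rfl⟩ := Language.mem_mul.1 hw
    obtain ⟨k, hik, hkj⟩ := wordRel_append.1 h
    exact ⟨k, ihe hu hik, ihf hv hkj⟩
  | inter e f ihe ihf => exact ⟨ihe hw.1 h, ihf hw.2 h⟩
  | iter e ihe =>
    obtain ⟨u, hu, v, hv, rfl⟩ := Language.mem_mul.1 hw
    obtain ⟨L, rfl, hL⟩ := Language.mem_kstar.1 hv
    obtain ⟨k, hik, hkj⟩ := wordRel_append.1 h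
    exact .head' (ihe hu hik)
      (reflTransGen_of_wordRel_flatten (fun y hy _ _ => ihe (hL y hy)) hkj)

theorem wordRel_lineRel_append (u w : List X) :
    wordRel (lineRel (u ++ w)) w u.length (u ++ w).length := by
  induction w generalizing u with
  | nil => simp [wordRel]
  | cons a w ih =>
    exact ⟨u.length + 1, ⟨rfl, by simp⟩, by simpa using ih (u ++ [a])⟩

theorem extract_mem_slang_of_sinterp_lineRel {w : List X} {e : SExp X} {i j : ℕ} (h : sinterp (lineRel w) e i j) :
    i ≤ j ∧ w.extract i j ∈ slang e := by
  induction e generalizing i j with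
  | var a =>
    obtain ⟨rfl, ha⟩ := h
    exact ⟨by omega, List.extract_add_one_of_getElem? ha⟩
  | plus e f ihe ihf =>
    rcases h with h | h
    · exact (ihe h).imp_right fun hm => (Language.mem_add _ _ _).2 (Or.inl hm)
    · exact (ihf h).imp_right fun hm => (Language.mem_add _ _ _).2 (Or.inr hm)
  | comp e f ihe ihf =>
    obtain ⟨k, hik, hkj⟩ := h
    obtain ⟨hik, hu⟩ := ihe hik
    obtain ⟨hkj, hv⟩ := ihf hkj
    refine ⟨hik.trans hkj, ?_⟩
    rw [← w.extract_append_extract hik hkj]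
    exact Language.append_mem_mul hu hv
  | inter e f ihe ihf =>
    obtain ⟨hij, he⟩ := ihe h.1
    exact ⟨hij, he, (ihf h.2).2⟩
  | iter e ihe =>
    induction h with
    | single h => exact (ihe h).imp_right Language.mem_mul_kstar_of_mem
    | tail _ hkj ih =>
      obtain ⟨hik, hu⟩ := ih
      obtain ⟨hkj, hv⟩ := ihe hkj
      refine ⟨hik.trans hkj, ?_⟩
      rw [← w.extract_append_extract hik hkj]
      exact Language.append_mem_mul_kstar hu hv

theorem mem_slang_iff_sinterp_lineRel {e : SExp X} {w : List X} :
    w ∈ slang e ↔ sinterp (lineRel w) e 0 w.length :=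
  ⟨fun h => sinterp_of_mem_slang h (by simpa using wordRel_lineRel_append [] w),
    fun h => by simpa using (extract_mem_slang_of_sinterp_lineRel h).2⟩

theorem mem_slang_iff_exists_gle_sgrOf {e : SExp X} {w : List X} :
    w ∈ slang e ↔ ∃ v ∈ strms e, gle (wordGraph w) (sgrOf v) := by
  simp only [mem_slang_iff_sinterp_lineRel, sinterp_iff_exists_ginterp, gle_wordGraph_iff]

end Words

section SigmaPlus

variable {X S : Type} {σ : X → S → S → Prop} {i j : S}

theorem mem_slang_foldl_plus {l : List X} {E : SExp X} {w : List X} :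
    w ∈ slang (l.foldl (fun e b => SExp.plus e (SExp.var b)) E) ↔
      w ∈ slang E ∨ ∃ x ∈ l, w = [x] := by
  induction l generalizing E with
  | nil => simp
  | cons b l ih =>
    simp only [List.foldl_cons, ih, slang, Language.mem_add, Language.mem_singleton_iff]
    simp [or_assoc]

theorem sinterp_foldl_plus {l : List X} {E : SExp X} :
    sinterp σ (l.foldl (fun e b => SExp.plus e (SExp.var b)) E) i j ↔
      sinterp σ E i j ∨ ∃ x ∈ l, σ x i j := by
  induction l generalizing E with
  | nil => simp
  | cons b l ih => simp [ih, sinterp, or_assoc]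

theorem mem_slang_iter_sumOf {a : X} {l : List X} (hcover : ∀ x, x = a ∨ x ∈ l) {w : List X}
    (hw : w ≠ []) : w ∈ slang (SExp.iter (sumOf a l)) := by
  have hletter : ∀ x, [x] ∈ slang (sumOf a l) := fun x => by
    simpa [sumOf, mem_slang_foldl_plus, slang, Language.mem_singleton_iff] using hcover x
  obtain ⟨x, w, rfl⟩ := List.exists_cons_of_ne_nil hw
  refine Language.append_mem_mul (hletter x) (Language.mem_kstar.2 ⟨w.map ([·]), ?_, ?_⟩)
  · exact (List.flatMap_singleton' w).symm
  · simpa using fun y _ => hletter y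

theorem exists_wordRel_of_transGen (h : Relation.TransGen (fun i j => ∃ x, σ x i j) i j) :
    ∃ w ≠ [], wordRel σ w i j := by
  induction h with
  | single h =>
    obtain ⟨x, hx⟩ := h
    exact ⟨[x], by simp, _, hx, rfl⟩
  | tail _ hkj ih =>
    obtain ⟨w, -, hw⟩ := ih
    obtain ⟨x, hx⟩ := hkj
    exact ⟨w ++ [x], by simp, wordRel_append.2 ⟨_, hw, _, hx, rfl⟩⟩

theorem exists_wordRel_of_sinterp_iter_sumOf {a : X} {l : List X}
    (h : sinterp σ (SExp.iter (sumOf a l)) i j) : ∃ w ≠ [], wordRel σ w i j := by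
  refine exists_wordRel_of_transGen (Relation.TransGen.mono (fun i j hij => ?_) i j h)
  rcases sinterp_foldl_plus.1 hij with hx | ⟨x, -, hx⟩
  exacts [⟨a, hx⟩, ⟨x, hx⟩]

end SigmaPlus

/-- For every nonempty word `w`, `w ∈ L(e)` iff the word-graph of `w` is below
some graph of `e` modulo homomorphism.  Consequently, when `a :: l` enumerates
the alphabet, `Σ⁺ ⊆ L(e)` iff `Trm(Σ⁺) ⊆ ⌊Trm(e)⌋`, iff `Σ⁺ ≤ e` is valid in
all algebras of binary relations. -/
theorem mem_slang_iff_wordGraph_le {A : Type} (e : SExp A) :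
    (∀ w : List A, w ≠ [] →
        (w ∈ slang e ↔ ∃ v ∈ strms e, gle (wordGraph w) (sgrOf v)))
    ∧ (∀ (a : A) (l : List A), (∀ x : A, x = a ∨ x ∈ l) →
        (((∀ w : List A, w ≠ [] → w ∈ slang e) ↔
            ∀ u ∈ strms (SExp.iter (sumOf a l)),
              ∃ v ∈ strms e, gle (sgrOf u) (sgrOf v))
          ∧ ((∀ w : List A, w ≠ [] → w ∈ slang e) ↔
            ∀ (S : Type) (σ : A → S → S → Prop) (i j : S),
              sinterp σ (SExp.iter (sumOf a l)) i j → sinterp σ e i j))) := by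
  refine ⟨fun w _ => mem_slang_iff_exists_gle_sgrOf, fun a l hcover => ?_⟩
  have valid_of_lang (hall : ∀ w : List A, w ≠ [] → w ∈ slang e) (S : Type)
      (σ : A → S → S → Prop) (i j : S) (h : sinterp σ (SExp.iter (sumOf a l)) i j) :
      sinterp σ e i j := by
    obtain ⟨w, hw, hwσ⟩ := exists_wordRel_of_sinterp_iter_sumOf h
    exact sinterp_of_mem_slang (hall w hw) hwσ
  refine ⟨⟨fun hall u hu => ?_, fun hle w hw => ?_⟩, ⟨valid_of_lang, fun hvalid w hw => ?_⟩⟩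
  · have hu' := (sinterp_iff_exists_ginterp _).2
      ⟨u, hu, gle_iff_ginterp_edgeRel.1 (gle_refl (sgrOf u))⟩
    exact (sinterp_iff_exists_ginterp e).1 (valid_of_lang hall _ _ _ _ hu')
  · obtain ⟨u, hu, hwu⟩ := mem_slang_iff_exists_gle_sgrOf.1 (mem_slang_iter_sumOf hcover hw)
    obtain ⟨v, hv, huv⟩ := hle u hu
    exact mem_slang_iff_exists_gle_sgrOf.2 ⟨v, hv, gle_trans hwu huv⟩
  · exact mem_slang_iff_sinterp_lineRel.2
      (hvalid ℕ _ 0 w.length (mem_slang_iff_sinterp_lineRel.1 (mem_slang_iter_sumOf hcover hw)))
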